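/- arXiv:1603.09387 — 2 statements merged into one kernel-verified Lean document; each statement's English description precedes it below -/
import Mathlib

section
/- Every nonempty word u over a totally ordered alphabet admits a unique decomposition u = l_1 l_2 ⋯ l_r as a non-increasing concatenation of Lyndon words, i.e. with each l_i Lyndon and l_r ≤ ⋯ ≤ l_1 in lexicographic order. -/
/-!
Existence: prepend the letters of the word one at a time, each a Lyndon word of length one,
merging the first factor `a` with the next one `c` as long as `a < c`; this keeps the factors
Lyndon, since `a ++ c` is Lyndon whenever `a` and `c` are Lyndon and `a < c`.
Uniqueness: in a non-increasing Lyndon factorization every nonempty suffix of the word is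
bounded below by some factor, hence by the last one; so the last factor is the
lexicographically least nonempty suffix of the word, which determines it, and one concludes
by induction on the number of factors.
-/

/-- `u` is a Lyndon word: nonempty, and lexicographically smaller than every
proper nonempty "right factor" arising from a factorization `u = v ++ w`. -/
def IsLyndon {X : Type*} [LinearOrder X] (u : List X) : Prop :=
  u ≠ [] ∧ ∀ v w : List X, v ≠ [] → w ≠ [] → u = v ++ w → u < w

theorem List.Lex.append_append_of_not_isPrefix {α : Type*} {r : α → α → Prop} :
    ∀ {x y : List α}, List.Lex r x y → ¬ x <+: y →
      ∀ s t : List α, List.Lex r (x ++ s) (y ++ t)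
  | _, _, .nil, h => absurd List.nil_prefix h
  | _, _, .rel hab, _ => fun _ _ => .rel hab
  | _, _, .cons h, hp => fun s t =>
      .cons (h.append_append_of_not_isPrefix
        (fun hpre => hp (List.cons_prefix_cons.2 ⟨rfl, hpre⟩)) s t)

section

variable {X : Type*} [LinearOrder X]

theorem isLyndon_singleton (a : X) : IsLyndon [a] := by
  refine ⟨List.cons_ne_nil a [], fun v w hv hw h => ?_⟩
  rcases List.append_eq_singleton_iff.1 h.symm with ⟨rfl, -⟩ | ⟨-, rfl⟩ <;> contradiction

namespace IsLyndon

variable {u v w p : List X}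

theorem append_lt_append_of_eq_append (hu : IsLyndon u) (hp : p ≠ []) (hw : w ≠ [])
    (h : u = p ++ w) (s t : List X) : u ++ s < w ++ t := by
  refine (hu.2 p w hp hw h).append_append_of_not_isPrefix (fun hpre => hp ?_) s t
  have hlen : u.length = p.length + w.length := by rw [h, List.length_append]
  exact List.length_eq_zero_iff.1 (by have := hpre.length_le; omega)

theorem le_append_of_isSuffix (hu : IsLyndon u) (hw : w ≠ []) (hwu : w <:+ u) (t : List X) :
    u ≤ w ++ t := by
  obtain ⟨p, rfl⟩ := hwu
  rcases eq_or_ne p [] with rfl | hp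
  · exact not_lt.1 List.le_append_left
  · simpa using (hu.append_lt_append_of_eq_append hp hw rfl [] t).le

theorem append_lt (hv : IsLyndon v) (hu : u ≠ []) (huv : u < v) : u ++ v < v := by
  by_cases hpre : u <+: v
  · obtain ⟨v', rfl⟩ := hpre
    have hv' : v' ≠ [] := by
      rintro rfl
      simp at huv
    exact List.append_left_lt (hv.2 u v' hu hv' rfl)
  · simpa using huv.append_append_of_not_isPrefix hpre v []

theorem append (hu : IsLyndon u) (hv : IsLyndon v) (huv : u < v) : IsLyndon (u ++ v) := by
  have hlt : u ++ v < v := hv.append_lt hu.1 huv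
  refine ⟨by simp [hu.1], fun p q hp hq h => ?_⟩
  rcases List.append_eq_append_iff.1 h with ⟨w, -, hwq⟩ | ⟨w, hpw, hqw⟩
  · rcases eq_or_ne w [] with rfl | hw
    · simpa [hwq] using hlt
    · exact hlt.trans (hv.2 w q hw hq hwq)
  · rcases eq_or_ne w [] with rfl | hw
    · simpa [hqw] using hlt
    · rw [hqw]
      exact hu.append_lt_append_of_eq_append hp hw hpw v v

end IsLyndon

/-- `L` is a Lyndon factorization of the word `L.flatten`. -/
def IsLyndonFactorization (L : List (List X)) : Prop :=
  (∀ l ∈ L, IsLyndon l) ∧ L.IsChain (fun a b => b ≤ a)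

namespace IsLyndonFactorization

theorem left_of_append {L M : List (List X)} (h : IsLyndonFactorization (L ++ M)) :
    IsLyndonFactorization L :=
  ⟨fun l hl => h.1 l (List.mem_append_left M hl), h.2.left_of_append⟩

theorem exists_flatten_eq_append {a : List X} (ha : IsLyndon a) {M : List (List X)}
    (hM : IsLyndonFactorization M) :
    ∃ N, IsLyndonFactorization N ∧ N.flatten = a ++ M.flatten := by
  induction M generalizing a with
  | nil => exact ⟨[a], ⟨by simpa using ha, List.isChain_singleton a⟩, by simp⟩
  | cons c M ih =>
    obtain ⟨hlyn, hchain⟩ := hM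
    by_cases hca : c ≤ a
    · exact ⟨a :: c :: M, ⟨List.forall_mem_cons.2 ⟨ha, hlyn⟩,
        List.isChain_cons_cons.2 ⟨hca, hchain⟩⟩, rfl⟩
    · obtain ⟨N, hN, hNM⟩ := ih (ha.append (hlyn c List.mem_cons_self) (not_le.1 hca))
        ⟨fun l hl => hlyn l (List.mem_cons_of_mem c hl), hchain.tail⟩
      exact ⟨N, hN, by simp [hNM]⟩

theorem exists_flatten_eq (u : List X) : ∃ L, IsLyndonFactorization L ∧ L.flatten = u := by
  induction u with
  | nil => exact ⟨[], ⟨by simp, List.isChain_nil⟩, rfl⟩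
  | cons x u ih =>
    obtain ⟨M, hM, rfl⟩ := ih
    exact exists_flatten_eq_append (isLyndon_singleton x) hM

theorem exists_le_of_isSuffix {L : List (List X)} (hL : ∀ l ∈ L, IsLyndon l) {s : List X}
    (hs : s ≠ []) (hsL : s <:+ L.flatten) : ∃ l ∈ L, l ≤ s := by
  induction L with
  | nil => exact absurd (List.suffix_nil.1 hsL) hs
  | cons l L ih =>
    have ih' := ih (fun m hm => hL m (List.mem_cons_of_mem l hm))
    obtain ⟨t, ht⟩ := hsL
    rcases List.append_eq_append_iff.1 (ht.trans List.flatten_cons) with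
      ⟨w, hl, hsw⟩ | ⟨w, -, hLw⟩
    · rcases eq_or_ne w [] with rfl | hw
      · obtain ⟨m, hm, hms⟩ := ih' (by simp [hsw])
        exact ⟨m, List.mem_cons_of_mem l hm, hms⟩
      · refine ⟨l, List.mem_cons_self, ?_⟩
        rw [hsw]
        exact (hL l List.mem_cons_self).le_append_of_isSuffix hw ⟨t, hl.symm⟩ _
    · obtain ⟨m, hm, hms⟩ := ih' ⟨w, hLw.symm⟩
      exact ⟨m, List.mem_cons_of_mem l hm, hms⟩

theorem last_le_of_isSuffix {L : List (List X)} {l s : List X}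
    (hL : IsLyndonFactorization (L ++ [l])) (hs : s ≠ []) (hsL : s <:+ (L ++ [l]).flatten) :
    l ≤ s := by
  obtain ⟨m, hm, hms⟩ := exists_le_of_isSuffix hL.1 hs hsL
  have hpair := (List.pairwise_append.1 (List.isChain_iff_pairwise.1 hL.2)).2.2
  rcases List.mem_append.1 hm with hm | hm
  · exact (hpair m hm l (List.mem_singleton_self l)).trans hms
  · rwa [List.mem_singleton.1 hm] at hms

theorem eq_nil_of_flatten_eq_nil {L : List (List X)} (hL : IsLyndonFactorization L)
    (h : L.flatten = []) : L = [] :=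
  List.eq_nil_iff_forall_not_mem.2 fun l hl => (hL.1 l hl).1 (List.flatten_eq_nil_iff.1 h l hl)

theorem eq_of_flatten_eq {L M : List (List X)} (hL : IsLyndonFactorization L)
    (hM : IsLyndonFactorization M) (h : L.flatten = M.flatten) : L = M := by
  induction L using List.reverseRecOn generalizing M with
  | nil => exact (hM.eq_nil_of_flatten_eq_nil h.symm).symm
  | append_singleton L l ih =>
    rcases M.eq_nil_or_concat' with rfl | ⟨M, m, rfl⟩
    · exact hL.eq_nil_of_flatten_eq_nil h
    · have hsplit : L.flatten ++ l = M.flatten ++ m := by simpa using h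
      have hlm : l = m := le_antisymm
        (hL.last_le_of_isSuffix (hM.1 m (by simp)).1 (by rw [h]; simp))
        (hM.last_le_of_isSuffix (hL.1 l (by simp)).1 (by rw [← h]; simp))
      subst hlm
      rw [ih hL.left_of_append hM.left_of_append (List.append_cancel_right hsplit)]

end IsLyndonFactorization

end

theorem lyndon_factorization_unique_general {X : Type*} [LinearOrder X] (u : List X) :
    ∃! L : List (List X),
      u = L.flatten ∧ (∀ l ∈ L, IsLyndon l) ∧ L.Chain' (fun a b => b ≤ a) := by
  obtain ⟨L, hL, rfl⟩ := IsLyndonFactorization.exists_flatten_eq u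
  exact ⟨L, ⟨rfl, hL⟩, fun M ⟨hLM, hM⟩ =>
    IsLyndonFactorization.eq_of_flatten_eq hM hL hLM.symm⟩

/-- Chen–Fox–Lyndon: every nonempty word admits a unique decomposition as a
non-increasing concatenation of Lyndon words. -/
theorem lyndon_factorization_unique {X : Type*} [LinearOrder X] (u : List X) (hu : u ≠ []) :
    ∃! L : List (List X),
      u = L.flatten ∧ (∀ l ∈ L, IsLyndon l) ∧ L.Chain' (fun a b => b ≤ a) :=
  lyndon_factorization_unique_general u
end

section
/- Let U be a cocommutative Hopf algebra over a field k of characteristic zero, generated as an algebra by a finite set S of primitive elements. Then U is isomorphic as a Hopf algebra to the universal enveloping algebra U(n) of the Lie algebra n = P(U) of primitive elements of U. -/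
open TensorProduct

attribute [local instance 100] LieRing.ofAssociativeRing

/-!
The canonical map `φ : U(P) → U` is surjective because `U` is generated by primitives. For
injectivity, filter `U(P)` by `F m`, the span of products of at most `m` generators. The reduced
coproduct `Δ̄ a = Δ a - a ⊗ 1 - 1 ⊗ a` maps `F (m + 1)` into `F m ⊗ F m`, so if `φ` is injective on
`F m` and `φ a = 0` with `a ∈ F (m + 1)`, then `(φ ⊗ φ) (Δ̄ a) = Δ̄ (φ a) = 0` forces `Δ̄ a = 0`
(over a field, tensor products of injective maps are injective): `a` is primitive. The operation
`ψ = μ ∘ Δ` acts on `F (m + 1)` as multiplication by `2 ^ (m + 1)` modulo `F m`, whereas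
`ψ a = 2 a` for primitive `a`; in characteristic zero this puts `a` in `F m` once `m ≥ 1`, and
induction gives `a = 0`.
-/

lemma Algebra.TensorProduct.lie_tmul_one_add_one_tmul {R A : Type*} [CommRing R] [Ring A]
    [Algebra R A] (a b : A) :
    ⁅a ⊗ₜ[R] (1 : A) + 1 ⊗ₜ[R] a, b ⊗ₜ[R] (1 : A) + 1 ⊗ₜ[R] b⁆ =
      ⁅a, b⁆ ⊗ₜ[R] 1 + 1 ⊗ₜ[R] ⁅a, b⁆ := by
  simp only [Ring.lie_def, mul_add, add_mul, Algebra.TensorProduct.tmul_mul_tmul, one_mul,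
    mul_one, sub_tmul, tmul_sub]
  abel

namespace Bialgebra

variable (R B : Type*) [CommRing R] [Ring B] [Bialgebra R B]

def primitives : LieSubalgebra R B where
  carrier := {x | Coalgebra.comul (R := R) x = x ⊗ₜ 1 + 1 ⊗ₜ x}
  add_mem' {a b} (ha : _ = _) (hb : _ = _) := show _ = _ by
    rw [map_add, ha, hb, add_tmul, tmul_add]
    abel
  zero_mem' := show _ = _ by simp
  smul_mem' c x (hx : _ = _) := show _ = _ by
    rw [map_smul, hx, smul_add, smul_tmul', smul_tmul', smul_tmul _ (1 : B) x]
  lie_mem' {a b} (ha : _ = _) (hb : _ = _) := show _ = _ by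
    rw [Ring.lie_def, map_sub, comul_mul, comul_mul, ha, hb, ← Ring.lie_def,
      Algebra.TensorProduct.lie_tmul_one_add_one_tmul]
    rfl

variable {R B}

lemma mem_primitives {x : B} :
    x ∈ primitives R B ↔ Coalgebra.comul (R := R) x = x ⊗ₜ 1 + 1 ⊗ₜ x := Iff.rfl

lemma counit_eq_zero_of_mem_primitives {x : B} (hx : x ∈ primitives R B) :
    Coalgebra.counit (R := R) x = 0 := by
  have h := Coalgebra.rTensor_counit_comul (R := R) x
  rw [mem_primitives.1 hx, map_add, LinearMap.rTensor_tmul, LinearMap.rTensor_tmul,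
    counit_one, add_eq_right] at h
  simpa using congrArg (fun t ↦ Coalgebra.counit (R := R) (TensorProduct.lid R B t)) h

end Bialgebra

lemma Submodule.lie_mem_pow {R A : Type*} [CommRing R] [Ring A] [Algebra R A]
    {M : Submodule R A} {a : A} (hM : ∀ x ∈ M, ⁅a, x⁆ ∈ M) {n : ℕ} {x : A} (hx : x ∈ M ^ n) :
    ⁅a, x⁆ ∈ M ^ n := by
  induction hx using Submodule.pow_induction_on_left' with
  | algebraMap r => simp [Ring.lie_def, Algebra.commutes]
  | add x y i _ _ hx hy => rw [lie_add]; exact add_mem hx hy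
  | mem_mul m hm i x hx ih =>
    have hlie : ⁅a, m * x⁆ = ⁅a, m⁆ * x + m * ⁅a, x⁆ := by
      simp only [Ring.lie_def]; noncomm_ring
    rw [hlie, pow_succ']
    exact add_mem (Submodule.mul_mem_mul (hM m hm) hx) (Submodule.mul_mem_mul hm ih)

lemma LinearMap.mul'_tmul_one_add_one_tmul_mul {R A : Type*} [CommRing R] [Ring A] [Algebra R A]
    (p : A) (z : A ⊗[R] A) :
    LinearMap.mul' R A ((p ⊗ₜ 1 + 1 ⊗ₜ p) * z) =
      (2 : R) • (p * LinearMap.mul' R A z) -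
        LinearMap.mul' R A (LinearMap.rTensor A (LieAlgebra.ad R A p) z) := by
  induction z using TensorProduct.induction_on with
  | zero => simp
  | tmul u v =>
    simp only [add_mul, Algebra.TensorProduct.tmul_mul_tmul, one_mul, map_add,
      LinearMap.mul'_apply, LinearMap.rTensor_tmul, LieAlgebra.ad_apply, Ring.lie_def]
    rw [two_smul]
    noncomm_ring
  | add z w hz hw =>
    simp only [mul_add, map_add, hz, hw, smul_add]
    abel

namespace UniversalEnvelopingAlgebra

section CommRing

variable {R L : Type*} [CommRing R] [LieRing L] [LieAlgebra R L]

local notation "𝔘" => UniversalEnvelopingAlgebra R L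

variable (R L) in
noncomputable def comul : 𝔘 →ₐ[R] 𝔘 ⊗[R] 𝔘 :=
  lift R
    { toLinearMap := (TensorProduct.mk R 𝔘 𝔘).flip 1 ∘ₗ (ι R).toLinearMap +
        TensorProduct.mk R 𝔘 𝔘 1 ∘ₗ (ι R).toLinearMap
      map_lie' {x y} := by
        simp only [LinearMap.toFun_eq_coe, LinearMap.add_apply, LinearMap.coe_comp,
          Function.comp_apply, LieHom.coe_toLinearMap, TensorProduct.mk_apply, LinearMap.flip_apply,
          LieHom.map_lie, Algebra.TensorProduct.lie_tmul_one_add_one_tmul] }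

@[simp]
lemma comul_ι (x : L) : comul R L (ι R x) = ι R x ⊗ₜ 1 + 1 ⊗ₜ ι R x := by
  rw [comul, lift_ι_apply]
  rfl

lemma map_lift_comul {B : Type*} [Ring B] [Bialgebra R B] (f : L →ₗ⁅R⁆ B)
    (hf : ∀ x, f x ∈ Bialgebra.primitives R B) (a : 𝔘) :
    TensorProduct.map (lift R f).toLinearMap (lift R f).toLinearMap (comul R L a) =
      Coalgebra.comul (R := R) (lift R f a) := by
  have key : (Algebra.TensorProduct.map (lift R f) (lift R f)).comp (comul R L) =
      (Bialgebra.comulAlgHom R B).comp (lift R f) := by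
    ext x
    simp only [LieHom.coe_comp, Function.comp_apply, AlgHom.coe_toLieHom, AlgHom.coe_comp,
      comul_ι, map_add, Algebra.TensorProduct.map_tmul, map_one, lift_ι_apply,
      Bialgebra.comulAlgHom_apply]
    exact ((Bialgebra.mem_primitives).1 (hf x)).symm
  exact AlgHom.congr_fun key a

variable (R L) in
def filtration (m : ℕ) : Submodule R 𝔘 :=
  (1 ⊔ LinearMap.range (ι R : L →ₗ⁅R⁆ 𝔘).toLinearMap) ^ m

lemma filtration_eq_pow (m : ℕ) : filtration R L m = filtration R L 1 ^ m := by
  rw [filtration, filtration, pow_one]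

lemma mem_filtration_zero {a : 𝔘} : a ∈ filtration R L 0 ↔ ∃ c, algebraMap R 𝔘 c = a :=
  Submodule.mem_one

lemma mem_filtration_one {a : 𝔘} :
    a ∈ filtration R L 1 ↔ ∃ c y, algebraMap R 𝔘 c + ι R y = a := by
  simp [filtration, Submodule.mem_sup, Submodule.mem_one]

lemma filtration_mono : Monotone (filtration R L) := fun _ _ h ↦
  pow_le_pow_right' le_sup_left h

lemma mul_mem_filtration {i j : ℕ} {a b : 𝔘} (ha : a ∈ filtration R L i)
    (hb : b ∈ filtration R L j) : a * b ∈ filtration R L (i + j) := by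
  rw [filtration, pow_add]
  exact Submodule.mul_mem_mul ha hb

lemma algebraMap_mem_filtration (c : R) (m : ℕ) : algebraMap R 𝔘 c ∈ filtration R L m :=
  filtration_mono m.zero_le (mem_filtration_zero.2 ⟨c, rfl⟩)

lemma one_mem_filtration (m : ℕ) : (1 : 𝔘) ∈ filtration R L m := by
  simpa using algebraMap_mem_filtration (L := L) (1 : R) m

lemma ι_mem_filtration (x : L) {m : ℕ} (hm : m ≠ 0) : ι R x ∈ filtration R L m :=
  filtration_mono (Nat.one_le_iff_ne_zero.2 hm) (mem_filtration_one.2 ⟨0, x, by simp⟩)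

lemma ι_mul_mem_filtration (x : L) {m : ℕ} {a : 𝔘} (ha : a ∈ filtration R L m) :
    ι R x * a ∈ filtration R L (m + 1) :=
  add_comm 1 m ▸ mul_mem_filtration (ι_mem_filtration x one_ne_zero) ha

variable (R L) in
lemma adjoin_range_ι : Algebra.adjoin R (Set.range (ι R : L → 𝔘)) = ⊤ := by
  have hι : (ι R : L → 𝔘) = mkAlgHom R L ∘ TensorAlgebra.ι R := rfl
  rw [hι, Set.range_comp, Algebra.adjoin_image, TensorAlgebra.adjoin_range_ι, Algebra.map_top,
    AlgHom.range_eq_top]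
  exact RingCon.mkₐ_surjective _

lemma exists_mem_filtration (a : 𝔘) : ∃ m, a ∈ filtration R L m := by
  have ha : a ∈ Algebra.adjoin R (Set.range (ι R : L → 𝔘)) := by
    rw [adjoin_range_ι]; trivial
  induction ha using Algebra.adjoin_induction with
  | mem _ hx => obtain ⟨x, rfl⟩ := hx; exact ⟨1, ι_mem_filtration x one_ne_zero⟩
  | algebraMap c => exact ⟨0, algebraMap_mem_filtration c 0⟩
  | add _ _ _ _ ha hb =>
    obtain ⟨i, hi⟩ := ha
    obtain ⟨j, hj⟩ := hb
    exact ⟨max i j, add_mem (filtration_mono (le_max_left i j) hi)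
      (filtration_mono (le_max_right i j) hj)⟩
  | mul _ _ _ _ ha hb =>
    obtain ⟨i, hi⟩ := ha
    obtain ⟨j, hj⟩ := hb
    exact ⟨i + j, mul_mem_filtration hi hj⟩

lemma lie_ι_mem_filtration (x : L) {m : ℕ} {a : 𝔘} (ha : a ∈ filtration R L m) :
    ⁅ι R x, a⁆ ∈ filtration R L m := by
  rw [filtration_eq_pow] at ha ⊢
  refine Submodule.lie_mem_pow (fun b hb ↦ ?_) ha
  obtain ⟨c, y, rfl⟩ := mem_filtration_one.1 hb
  refine mem_filtration_one.2 ⟨0, ⁅x, y⁆, ?_⟩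
  have hc : ⁅ι R x, algebraMap R 𝔘 c⁆ = 0 := by rw [Ring.lie_def, Algebra.commutes, sub_self]
  rw [lie_add, hc, LieHom.map_lie, map_zero]

theorem filtration_induction {C : ℕ → 𝔘 → Prop}
    (one : ∀ c y, C 0 (algebraMap R 𝔘 c + ι R y))
    (add : ∀ m a b, C m a → C m b → C m (a + b))
    (mul : ∀ m c y a, a ∈ filtration R L (m + 1) → C m a →
      C (m + 1) ((algebraMap R 𝔘 c + ι R y) * a))
    {m : ℕ} {a : 𝔘} (ha : a ∈ filtration R L (m + 1)) : C m a := by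
  induction m generalizing a with
  | zero => obtain ⟨c, y, rfl⟩ := mem_filtration_one.1 ha; exact one c y
  | succ m ih =>
    rw [filtration_eq_pow, pow_succ', ← filtration_eq_pow] at ha
    refine Submodule.mul_induction_on ha (fun w hw b hb ↦ ?_) (add _)
    obtain ⟨c, y, rfl⟩ := mem_filtration_one.1 hw
    exact mul m c y b hb (ih hb)

variable (R L) in
def tensorFiltration (m : ℕ) : Submodule R (𝔘 ⊗[R] 𝔘) :=
  Submodule.span R {z | ∃ i j, i + j ≤ m ∧
    ∃ u ∈ filtration R L i, ∃ v ∈ filtration R L j, u ⊗ₜ v = z}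

lemma tmul_mem_tensorFiltration {i j m : ℕ} (h : i + j ≤ m) {u v : 𝔘}
    (hu : u ∈ filtration R L i) (hv : v ∈ filtration R L j) :
    u ⊗ₜ v ∈ tensorFiltration R L m :=
  Submodule.subset_span ⟨i, j, h, u, hu, v, hv, rfl⟩

lemma tensorFiltration_mul_le (i j : ℕ) :
    tensorFiltration R L i * tensorFiltration R L j ≤ tensorFiltration R L (i + j) := by
  rw [tensorFiltration, tensorFiltration, Submodule.span_mul_span, Submodule.span_le]
  rintro _ ⟨_, ⟨i₁, j₁, h₁, u₁, hu₁, v₁, hv₁, rfl⟩, _, ⟨i₂, j₂, h₂, u₂, hu₂, v₂, hv₂, rfl⟩, rfl⟩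
  change u₁ ⊗ₜ[R] v₁ * u₂ ⊗ₜ[R] v₂ ∈ _
  rw [Algebra.TensorProduct.tmul_mul_tmul]
  exact tmul_mem_tensorFiltration (by omega) (mul_mem_filtration hu₁ hu₂)
    (mul_mem_filtration hv₁ hv₂)

lemma comul_mem_tensorFiltration {m : ℕ} {a : 𝔘} (ha : a ∈ filtration R L m) :
    comul R L a ∈ tensorFiltration R L m := by
  have h₁ : (filtration R L 1).map (comul R L).toLinearMap ≤ tensorFiltration R L 1 := by
    rw [Submodule.map_le_iff_le_comap]
    intro b hb
    obtain ⟨c, y, rfl⟩ := mem_filtration_one.1 hb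
    rw [Submodule.mem_comap, AlgHom.toLinearMap_apply, map_add, AlgHom.commutes, comul_ι,
      Algebra.TensorProduct.algebraMap_apply]
    have hy := ι_mem_filtration (R := R) y one_ne_zero
    have h₀ := one_mem_filtration (R := R) (L := L) 0
    exact add_mem (tmul_mem_tensorFiltration (by omega) (algebraMap_mem_filtration c 0) h₀)
      (add_mem (tmul_mem_tensorFiltration (by omega) hy h₀)
        (tmul_mem_tensorFiltration (by omega) h₀ hy))
  have hpow (n : ℕ) : tensorFiltration R L 1 ^ n ≤ tensorFiltration R L n := by
    induction n with
    | zero =>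
      rw [pow_zero, Submodule.one_le, Algebra.TensorProduct.one_def]
      exact tmul_mem_tensorFiltration (by omega) (one_mem_filtration 0) (one_mem_filtration 0)
    | succ n ih => exact (mul_le_mul' ih le_rfl).trans (tensorFiltration_mul_le n 1)
  rw [filtration_eq_pow] at ha
  refine hpow m (pow_le_pow_left' h₁ m ?_)
  rw [← Submodule.map_pow]
  exact Submodule.mem_map_of_mem ha

lemma mul'_rTensor_ad_mem_filtration (x : L) {m : ℕ} {z : 𝔘 ⊗[R] 𝔘}
    (hz : z ∈ tensorFiltration R L m) :
    LinearMap.mul' R 𝔘 (LinearMap.rTensor 𝔘 (LieAlgebra.ad R 𝔘 (ι R x)) z) ∈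
      filtration R L m := by
  induction hz using Submodule.span_induction with
  | mem z hz =>
    obtain ⟨i, j, h, u, hu, v, hv, rfl⟩ := hz
    rw [LinearMap.rTensor_tmul, LinearMap.mul'_apply, LieAlgebra.ad_apply]
    exact filtration_mono h (mul_mem_filtration (lie_ι_mem_filtration x hu) hv)
  | zero => simp
  | add z w _ _ hz hw => rw [map_add, map_add]; exact add_mem hz hw
  | smul c z _ hz => rw [map_smul, map_smul]; exact Submodule.smul_mem _ c hz

variable (R L) in
noncomputable def adamsTwo : 𝔘 →ₗ[R] 𝔘 := LinearMap.mul' R 𝔘 ∘ₗ (comul R L).toLinearMap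

lemma adamsTwo_ι_mul (y : L) (a : 𝔘) :
    adamsTwo R L (ι R y * a) = (2 : R) • (ι R y * adamsTwo R L a) -
      LinearMap.mul' R 𝔘 (LinearMap.rTensor 𝔘 (LieAlgebra.ad R 𝔘 (ι R y)) (comul R L a)) := by
  rw [adamsTwo, LinearMap.comp_apply, AlgHom.toLinearMap_apply, map_mul, comul_ι,
    LinearMap.mul'_tmul_one_add_one_tmul_mul]
  rfl

lemma adamsTwo_sub_mem_filtration {m : ℕ} {a : 𝔘} (ha : a ∈ filtration R L (m + 1)) :
    adamsTwo R L a - (2 : R) ^ (m + 1) • a ∈ filtration R L m := by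
  refine filtration_induction (C := fun m a ↦ adamsTwo R L a - (2 : R) ^ (m + 1) • a ∈
    filtration R L m) (fun c y ↦ ?_) (fun m a b ha hb ↦ ?_) (fun m c y a ha ih ↦ ?_) ha
  · convert algebraMap_mem_filtration (L := L) (-c) 0 using 1
    simp only [adamsTwo, LinearMap.comp_apply, AlgHom.toLinearMap_apply, map_add,
      AlgHom.commutes, comul_ι, Algebra.TensorProduct.algebraMap_apply, LinearMap.mul'_apply,
      mul_one, one_mul, zero_add, pow_one, map_neg]
    module
  · simpa only [map_add, smul_add, add_sub_add_comm] using add_mem ha hb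
  · set d := adamsTwo R L a - (2 : R) ^ (m + 1) • a
    have hd : adamsTwo R L a = d + (2 : R) ^ (m + 1) • a := (sub_add_cancel _ _).symm
    have key : adamsTwo R L ((algebraMap R 𝔘 c + ι R y) * a) -
        (2 : R) ^ (m + 1 + 1) • ((algebraMap R 𝔘 c + ι R y) * a) =
        c • d - (c * 2 ^ (m + 1)) • a + (2 : R) • (ι R y * d) -
          LinearMap.mul' R 𝔘 (LinearMap.rTensor 𝔘 (LieAlgebra.ad R 𝔘 (ι R y)) (comul R L a)) := by
      rw [add_mul, ← Algebra.smul_def, map_add, map_smul, adamsTwo_ι_mul, hd]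
      simp only [mul_add, mul_smul_comm, smul_add]
      module
    rw [key]
    refine sub_mem (add_mem (sub_mem ?_ ?_) ?_) ?_
    · exact Submodule.smul_mem _ c (filtration_mono m.le_succ ih)
    · exact Submodule.smul_mem _ _ ha
    · exact Submodule.smul_mem _ _ (ι_mul_mem_filtration y ih)
    · exact mul'_rTensor_ad_mem_filtration y (comul_mem_tensorFiltration ha)

variable (R L) in
noncomputable def reducedComul : 𝔘 →ₗ[R] 𝔘 ⊗[R] 𝔘 :=
  (comul R L).toLinearMap - (TensorProduct.mk R 𝔘 𝔘).flip 1 - TensorProduct.mk R 𝔘 𝔘 1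

lemma reducedComul_apply (a : 𝔘) : reducedComul R L a = comul R L a - a ⊗ₜ 1 - 1 ⊗ₜ a := rfl

lemma reducedComul_ι_mul (y : L) (a : 𝔘) :
    reducedComul R L (ι R y * a) = ι R y ⊗ₜ a + a ⊗ₜ ι R y +
      comul R L (ι R y) * reducedComul R L a := by
  have ha : comul R L a = reducedComul R L a + a ⊗ₜ 1 + 1 ⊗ₜ a := by
    rw [reducedComul_apply]; abel
  rw [reducedComul_apply, map_mul, ha, comul_ι]
  simp only [mul_add, add_mul, Algebra.TensorProduct.tmul_mul_tmul, one_mul, mul_one]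
  abel

lemma comul_ι_mul_mem_map₂_filtration (y : L) {m : ℕ} {z : 𝔘 ⊗[R] 𝔘}
    (hz : z ∈ Submodule.map₂ (TensorProduct.mk R 𝔘 𝔘) (filtration R L m) (filtration R L m)) :
    comul R L (ι R y) * z ∈ Submodule.map₂ (TensorProduct.mk R 𝔘 𝔘)
      (filtration R L (m + 1)) (filtration R L (m + 1)) := by
  rw [Submodule.map₂_eq_span_image2] at hz
  induction hz using Submodule.span_induction with
  | mem z hz =>
    obtain ⟨u, hu, v, hv, rfl⟩ := hz
    change comul R L (ι R y) * u ⊗ₜ[R] v ∈ _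
    rw [comul_ι, add_mul, Algebra.TensorProduct.tmul_mul_tmul,
      Algebra.TensorProduct.tmul_mul_tmul, one_mul, one_mul]
    exact add_mem
      (Submodule.apply_mem_map₂ _ (ι_mul_mem_filtration y hu) (filtration_mono m.le_succ hv))
      (Submodule.apply_mem_map₂ _ (filtration_mono m.le_succ hu) (ι_mul_mem_filtration y hv))
  | zero => simp
  | add z w _ _ hz hw => rw [mul_add]; exact add_mem hz hw
  | smul c z _ hz => rw [mul_smul_comm]; exact Submodule.smul_mem _ c hz

lemma reducedComul_mem_map₂_filtration {m : ℕ} {a : 𝔘} (ha : a ∈ filtration R L (m + 1)) :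
    reducedComul R L a ∈
      Submodule.map₂ (TensorProduct.mk R 𝔘 𝔘) (filtration R L m) (filtration R L m) := by
  refine filtration_induction (C := fun m a ↦ reducedComul R L a ∈
    Submodule.map₂ (TensorProduct.mk R 𝔘 𝔘) (filtration R L m) (filtration R L m))
    (fun c y ↦ ?_) (fun m a b ha hb ↦ ?_) (fun m c y a ha ih ↦ ?_) ha
  · have h : reducedComul R L (algebraMap R 𝔘 c + ι R y) = -(1 ⊗ₜ algebraMap R 𝔘 c) := by
      rw [reducedComul_apply, map_add, AlgHom.commutes, comul_ι,
        Algebra.TensorProduct.algebraMap_apply, add_tmul, tmul_add]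
      abel
    rw [h]
    exact neg_mem (Submodule.apply_mem_map₂ _ (one_mem_filtration 0)
      (algebraMap_mem_filtration c 0))
  · rw [map_add]; exact add_mem ha hb
  · rw [add_mul, ← Algebra.smul_def, map_add, map_smul, reducedComul_ι_mul]
    have hy := ι_mem_filtration (R := R) y (Nat.succ_ne_zero m)
    refine add_mem (Submodule.smul_mem _ c ?_) (add_mem (add_mem ?_ ?_) ?_)
    · exact Submodule.map₂_le_map₂ (filtration_mono m.le_succ) (filtration_mono m.le_succ) ih
    · exact Submodule.apply_mem_map₂ _ hy ha
    · exact Submodule.apply_mem_map₂ _ ha hy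
    · exact comul_ι_mul_mem_map₂_filtration y ih

lemma lift_surjective {A : Type*} [Ring A] [Algebra R A] (f : L →ₗ⁅R⁆ A)
    (hf : Algebra.adjoin R (Set.range f) = ⊤) : Function.Surjective (lift R f) := by
  rw [← AlgHom.range_eq_top, eq_top_iff, ← hf, Algebra.adjoin_le_iff]
  rintro _ ⟨x, rfl⟩
  exact ⟨ι R x, lift_ι_apply R f x⟩

end CommRing

section Field

variable {k L B : Type*} [Field k] [LieRing L] [LieAlgebra k L] [Ring B] [Bialgebra k B]

lemma mem_filtration_of_reducedComul_eq_zero [CharZero k] {m : ℕ} (hm : m ≠ 0)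
    {a : UniversalEnvelopingAlgebra k L} (ha : a ∈ filtration k L (m + 1))
    (h : reducedComul k L a = 0) : a ∈ filtration k L m := by
  have hψ : adamsTwo k L a = (2 : k) • a := by
    rw [reducedComul_apply, sub_sub, sub_eq_zero] at h
    rw [adamsTwo, LinearMap.comp_apply, AlgHom.toLinearMap_apply, h, map_add,
      LinearMap.mul'_apply, LinearMap.mul'_apply, mul_one, one_mul, two_smul]
  have h2 : (2 : k) ^ (m + 1) ≠ 2 := by
    have : 2 ^ (m + 1) ≠ 2 ^ 1 := (Nat.pow_right_injective le_rfl).ne (by omega)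
    exact_mod_cast this
  have h := adamsTwo_sub_mem_filtration ha
  rwa [hψ, ← sub_smul, Submodule.smul_mem_iff _ (sub_ne_zero.2 h2.symm)] at h

lemma reducedComul_eq_zero_of_lift_eq_zero (f : L →ₗ⁅k⁆ B)
    (hf : ∀ x, f x ∈ Bialgebra.primitives k B) {m : ℕ}
    (hinj : Disjoint (filtration k L m) (LinearMap.ker (lift k f).toLinearMap))
    {a : UniversalEnvelopingAlgebra k L} (ha : a ∈ filtration k L (m + 1))
    (h0 : lift k f a = 0) : reducedComul k L a = 0 := by
  set φ := (lift k f).toLinearMap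
  obtain ⟨s, hs⟩ : reducedComul k L a ∈ LinearMap.range (mapIncl (filtration k L m)
      (filtration k L m)) := by
    rw [range_mapIncl]; exact reducedComul_mem_map₂_filtration ha
  have hφ : TensorProduct.map φ φ (reducedComul k L a) = 0 := by
    rw [reducedComul_apply, map_sub, map_sub, map_lift_comul f hf, map_tmul, map_tmul]
    simp [φ, h0]
  have hφm : Function.Injective (φ.domRestrict (filtration k L m)) :=
    LinearMap.injective_domRestrict_iff.2 hinj
  have hs0 : s = 0 := by
    refine TensorProduct.map_injective_of_flat_flat _ _ hφm hφm ?_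
    rw [map_zero, ← hφ, ← hs, mapIncl, ← LinearMap.comp_apply, ← TensorProduct.map_comp]
    rfl
  rw [← hs, hs0, map_zero]

lemma disjoint_filtration_ker_lift [CharZero k] (f : L →ₗ⁅k⁆ B) (hf_inj : Function.Injective f)
    (hf : ∀ x, f x ∈ Bialgebra.primitives k B) (m : ℕ) :
    Disjoint (filtration k L m) (LinearMap.ker (lift k f).toLinearMap) := by
  suffices h : ∀ m, Disjoint (filtration k L (m + 1)) (LinearMap.ker (lift k f).toLinearMap) from
    (h m).mono_left (filtration_mono m.le_succ)
  intro m
  induction m with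
  | zero =>
    refine Submodule.disjoint_def.2 fun a ha h0 ↦ ?_
    obtain ⟨c, y, rfl⟩ := mem_filtration_one.1 ha
    rw [LinearMap.mem_ker, AlgHom.toLinearMap_apply, map_add, AlgHom.commutes,
      lift_ι_apply k] at h0
    have hc : c = 0 := by
      simpa [Bialgebra.counit_eq_zero_of_mem_primitives (hf y)] using
        congrArg (Coalgebra.counit (R := k)) h0
    rw [hc, map_zero, zero_add] at h0 ⊢
    rw [hf_inj (h0.trans (map_zero f).symm), map_zero]
  | succ m ih =>
    refine Submodule.disjoint_def.2 fun a ha h0 ↦ Submodule.disjoint_def.1 ih a ?_ h0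
    exact mem_filtration_of_reducedComul_eq_zero m.succ_ne_zero ha
      (reducedComul_eq_zero_of_lift_eq_zero f hf ih ha h0)

theorem lift_injective [CharZero k] (f : L →ₗ⁅k⁆ B) (hf_inj : Function.Injective f)
    (hf : ∀ x, f x ∈ Bialgebra.primitives k B) : Function.Injective (lift k f) := by
  refine (injective_iff_map_eq_zero _).2 fun a h0 ↦ ?_
  obtain ⟨m, hm⟩ := exists_mem_filtration a
  exact Submodule.disjoint_def.1 (disjoint_filtration_ker_lift f hf_inj hf m) a hm h0

end Field

end UniversalEnvelopingAlgebra

theorem hopf_iso_enveloping_of_primitively_generated_general {k U : Type*} [Field k] [CharZero k]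
    [Ring U] [HopfAlgebra k U]
    (S : Finset U)
    (hSprim : ∀ x ∈ S, Coalgebra.comul (R := k) x = x ⊗ₜ[k] 1 + 1 ⊗ₜ[k] x)
    (hgen : Algebra.adjoin k (S : Set U) = ⊤) :
    ∃ n : LieSubalgebra k U,
      (n : Set U) = {x : U | Coalgebra.comul (R := k) x = x ⊗ₜ[k] 1 + 1 ⊗ₜ[k] x} ∧
      ∃ φ : UniversalEnvelopingAlgebra k n ≃ₐ[k] U,
        ∀ x : n, φ (UniversalEnvelopingAlgebra.ι k x) = (x : U) := by
  let f := (Bialgebra.primitives k U).incl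
  have hgen' : Algebra.adjoin k (Set.range f) = ⊤ := by
    refine eq_top_iff.2 (hgen ▸ Algebra.adjoin_mono fun x hx ↦ ?_)
    exact ⟨⟨x, hSprim x hx⟩, rfl⟩
  refine ⟨Bialgebra.primitives k U, rfl, AlgEquiv.ofBijective _
    ⟨UniversalEnvelopingAlgebra.lift_injective f Subtype.val_injective (fun x ↦ x.2),
      UniversalEnvelopingAlgebra.lift_surjective f hgen'⟩,
    UniversalEnvelopingAlgebra.lift_ι_apply k f⟩

/-- Milnor–Moore/Cartier–Kostant: a cocommutative Hopf algebra over a field of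
characteristic zero generated as an algebra by finitely many primitive elements is
isomorphic to the universal enveloping algebra of its Lie algebra of primitives. -/
theorem hopf_iso_enveloping_of_primitively_generated {k U : Type*} [Field k] [CharZero k]
    [Ring U] [HopfAlgebra k U]
    (hcocomm : ∀ u : U, (TensorProduct.comm k U U) (Coalgebra.comul (R := k) u) =
      Coalgebra.comul (R := k) u)
    (S : Finset U)
    (hSprim : ∀ x ∈ S, Coalgebra.comul (R := k) x = x ⊗ₜ[k] 1 + 1 ⊗ₜ[k] x)
    (hgen : Algebra.adjoin k (S : Set U) = ⊤) :
    ∃ n : LieSubalgebra k U,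
      (n : Set U) = {x : U | Coalgebra.comul (R := k) x = x ⊗ₜ[k] 1 + 1 ⊗ₜ[k] x} ∧
      ∃ φ : UniversalEnvelopingAlgebra k n ≃ₐ[k] U,
        ∀ x : n, φ (UniversalEnvelopingAlgebra.ι k x) = (x : U) :=
  hopf_iso_enveloping_of_primitively_generated_general S hSprim hgen
end
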